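/- arXiv:1909.09322 — 2 statements merged into one kernel-verified Lean document; each statement's English description precedes it below -/
import Mathlib

section
/- Let A be an invertible n×n real matrix and p(·) : ℝⁿ → [1,∞) a measurable exponent with 1 ≤ p_- ≤ p_+ < ∞ satisfying p(Ax) = p(x) for a.e. x ∈ ℝⁿ. Then for every f ∈ L^{p(·)}(ℝⁿ), ‖f ∘ A‖_{p(·)} ≤ max(1, |det A^{-1}|)^{1/p_-} ‖f‖_{p(·)}. In particular if |det A| ≥ 1 then ‖f∘A‖_{p(·)} ≤ ‖f‖_{p(·)}. -/
open MeasureTheory Metric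
open scoped ENNReal

noncomputable section

variable {X : Type*} [MeasureSpace X] [PseudoMetricSpace X]

/-- The modular of the variable Lebesgue space `L^{p(·)}`. -/
def modularVL (p f : X → ℝ) : ℝ≥0∞ := ∫⁻ x, ENNReal.ofReal (|f x| ^ p x)

/-- The Luxemburg norm of the variable Lebesgue space `L^{p(·)}`. -/
def luxNorm (p f : X → ℝ) : ℝ :=
  sInf {l : ℝ | 0 < l ∧ modularVL p (fun x => f x / l) ≤ 1}

/-- Membership in the variable Lebesgue space `L^{p(·)}`. -/
def MemVLp (p f : X → ℝ) : Prop :=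
  ∃ l : ℝ, 0 < l ∧ modularVL p (fun x => f x / l) < ⊤

/-- The (uncentered) Hardy–Littlewood maximal operator. -/
def hlMax (f : X → ℝ) (x : X) : ℝ :=
  sSup {r : ℝ | ∃ (c : X) (ρ : ℝ), 0 < ρ ∧ x ∈ ball c ρ ∧
    r = (volume (ball c ρ)).toReal⁻¹ * ∫ y in ball c ρ, |f y|}

/-- The fractional maximal operator of order `β` in dimension `nn`. -/
def fracMax (nn : ℕ) (β : ℝ) (f : X → ℝ) (x : X) : ℝ :=
  sSup {r : ℝ | ∃ (c : X) (ρ : ℝ), 0 < ρ ∧ x ∈ ball c ρ ∧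
    r = (volume (ball c ρ)).toReal ^ (β / (nn : ℝ) - 1) * ∫ y in ball c ρ, |f y|}

/-- The Fefferman–Stein sharp maximal function. -/
def sharpMax (f : X → ℝ) (x : X) : ℝ :=
  sSup {r : ℝ | ∃ (c : X) (ρ : ℝ), 0 < ρ ∧ x ∈ ball c ρ ∧
    r = (volume (ball c ρ)).toReal⁻¹ *
      ∫ y in ball c ρ, |f y - (volume (ball c ρ)).toReal⁻¹ * ∫ z in ball c ρ, f z|}

end

noncomputable section AuxLemmas

/-- Core scaling estimate for the modular. -/
lemma modular_scale {X : Type*} [MeasureSpace X] [PseudoMetricSpace X] (p f : X → ℝ) (l k d : ℝ)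
    (hk : 0 < k) (hd : 0 < d) (h : ∀ x, d ≤ k ^ p x) :
    modularVL p (fun x => f x / (k * l)) ≤
      (ENNReal.ofReal d)⁻¹ * modularVL p (fun x => f x / l) := by
  have hpt : ∀ x, ENNReal.ofReal (|f x / (k * l)| ^ p x) ≤
      (ENNReal.ofReal d)⁻¹ * ENNReal.ofReal (|f x / l| ^ p x) := by
    intro x
    have h1 : |f x / (k * l)| = |f x / l| / k := by
      rw [abs_div, abs_div, abs_mul, abs_of_pos hk, div_div, mul_comm]
    have h2 : |f x / (k * l)| ^ p x = |f x / l| ^ p x * (k ^ p x)⁻¹ := by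
      rw [h1, Real.div_rpow (abs_nonneg _) hk.le, div_eq_mul_inv]
    have h3 : |f x / (k * l)| ^ p x ≤ |f x / l| ^ p x * d⁻¹ := by
      rw [h2]
      exact mul_le_mul_of_nonneg_left (inv_anti₀ hd (h x))
        (Real.rpow_nonneg (abs_nonneg _) _)
    calc ENNReal.ofReal (|f x / (k * l)| ^ p x) ≤ ENNReal.ofReal (|f x / l| ^ p x * d⁻¹) :=
          ENNReal.ofReal_le_ofReal h3
      _ = (ENNReal.ofReal d)⁻¹ * ENNReal.ofReal (|f x / l| ^ p x) := by
          rw [ENNReal.ofReal_mul (Real.rpow_nonneg (abs_nonneg _) _),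
            ENNReal.ofReal_inv_of_pos hd, mul_comm]
  calc modularVL p (fun x => f x / (k * l))
      ≤ ∫⁻ x, (ENNReal.ofReal d)⁻¹ * ENNReal.ofReal (|f x / l| ^ p x) := lintegral_mono hpt
    _ = (ENNReal.ofReal d)⁻¹ * modularVL p (fun x => f x / l) :=
        lintegral_const_mul' _ _ (ENNReal.inv_ne_top.mpr (by simp [hd]))

/-- Change of variables for the modular. -/
lemma modular_cov {n : ℕ} (A : Matrix (Fin n) (Fin n) ℝ) (hdet : A.det ≠ 0)
    (p : (Fin n → ℝ) → ℝ) (hp : Measurable p)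
    (hinv : ∀ᵐ x, p (A.mulVec x) = p x)
    (f : (Fin n → ℝ) → ℝ) (hf : Measurable f) (l : ℝ) :
    modularVL p (fun x => f (A.mulVec x) / l) =
      ENNReal.ofReal |A.det|⁻¹ * modularVL p (fun x => f x / l) := by
  set g : (Fin n → ℝ) → ℝ≥0∞ := fun y => ENNReal.ofReal (|f y / l| ^ p y) with hg
  have hgm : Measurable g := by measurability
  have hlin : Measurable (Matrix.toLin' A) := (LinearMap.continuous_on_pi _).measurable
  have step1 : modularVL p (fun x => f (A.mulVec x) / l) = ∫⁻ x, g (A.mulVec x) := by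
    refine lintegral_congr_ae ?_
    filter_upwards [hinv] with x hx
    simp only [hg, hx]
  have step2 : (∫⁻ x, g (A.mulVec x)) = ∫⁻ x, g (Matrix.toLin' A x) := by
    simp only [Matrix.toLin'_apply]
  have step3 : (∫⁻ x, g (Matrix.toLin' A x)) =
      ∫⁻ y, g y ∂(Measure.map (Matrix.toLin' A) volume) :=
    (lintegral_map hgm hlin).symm
  rw [step1, step2, step3, Real.map_matrix_volume_pi_eq_smul_volume_pi hdet,
    lintegral_smul_measure, abs_inv]
  rfl

end AuxLemmas

/-- if `A` is invertible, `1 ≤ p_- ≤ p(x) ≤ p_+ < ∞` and `p(Ax) = p(x)` a.e.,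
then `‖f ∘ A‖_{p(·)} ≤ max(1, |det A⁻¹|)^{1/p_-} ‖f‖_{p(·)}` for every `f ∈ L^{p(·)}`;
in particular if `|det A| ≥ 1` then `‖f ∘ A‖_{p(·)} ≤ ‖f‖_{p(·)}`. -/
theorem stmt1 {n : ℕ} (A : Matrix (Fin n) (Fin n) ℝ) (hA : IsUnit A.det)
    (p : (Fin n → ℝ) → ℝ) (hp : Measurable p)
    (pminus pplus : ℝ) (h1 : 1 ≤ pminus)
    (hlb : ∀ x, pminus ≤ p x) (hub : ∀ x, p x ≤ pplus)
    (hinv : ∀ᵐ x, p (A.mulVec x) = p x)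
    (f : (Fin n → ℝ) → ℝ) (hf : Measurable f) (hfLp : MemVLp p f) :
    luxNorm p (fun x => f (A.mulVec x)) ≤
        max 1 |A⁻¹.det| ^ (1 / pminus) * luxNorm p f ∧
      (1 ≤ |A.det| → luxNorm p (fun x => f (A.mulVec x)) ≤ luxNorm p f) := by
  classical
  have hdet : A.det ≠ 0 := isUnit_iff_ne_zero.mp hA
  have hAinv : |A⁻¹.det| = |A.det|⁻¹ := by
    rw [Matrix.det_nonsing_inv, Ring.inverse_eq_inv', abs_inv]
  have hpm0 : (0 : ℝ) < pminus := lt_of_lt_of_le one_pos h1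
  set c : ℝ := max 1 |A⁻¹.det| with hc
  have hc1 : (1 : ℝ) ≤ c := le_max_left _ _
  have hc0 : (0 : ℝ) < c := lt_of_lt_of_le one_pos hc1
  set r : ℝ := c ^ (1 / pminus) with hr
  have hr1 : (1 : ℝ) ≤ r := Real.one_le_rpow hc1 (by positivity)
  have hr0 : (0 : ℝ) < r := lt_of_lt_of_le one_pos hr1
  set S : Set ℝ := {l : ℝ | 0 < l ∧ modularVL p (fun x => f x / l) ≤ 1} with hS
  set T : Set ℝ := {l : ℝ | 0 < l ∧ modularVL p (fun x => f (A.mulVec x) / l) ≤ 1} with hT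
  have hSlux : luxNorm p f = sInf S := rfl
  have hTlux : luxNorm p (fun x => f (A.mulVec x)) = sInf T := rfl
  -- `S` is nonempty
  obtain ⟨l₀, hl₀, hM⟩ := hfLp
  have hSne : S.Nonempty := by
    set M : ℝ≥0∞ := modularVL p (fun x => f x / l₀) with hMdef
    set k : ℝ := max 1 M.toReal with hk
    have hk1 : (1 : ℝ) ≤ k := le_max_left _ _
    have hk0 : (0 : ℝ) < k := lt_of_lt_of_le one_pos hk1
    have hMk : M ≤ ENNReal.ofReal k := by
      calc M = ENNReal.ofReal M.toReal := (ENNReal.ofReal_toReal hM.ne).symm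
        _ ≤ ENNReal.ofReal k := ENNReal.ofReal_le_ofReal (le_max_right _ _)
    refine ⟨k * l₀, mul_pos hk0 hl₀, ?_⟩
    have hscale := modular_scale p f l₀ k k hk0 hk0 (fun x => by
      calc k = k ^ (1 : ℝ) := (Real.rpow_one k).symm
        _ ≤ k ^ p x := Real.rpow_le_rpow_of_exponent_le hk1 (h1.trans (hlb x)))
    calc modularVL p (fun x => f x / (k * l₀)) ≤ (ENNReal.ofReal k)⁻¹ * M := hscale
      _ ≤ (ENNReal.ofReal k)⁻¹ * ENNReal.ofReal k := mul_le_mul_right hMk _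
      _ = 1 := ENNReal.inv_mul_cancel (by simp [hk0]) ENNReal.ofReal_ne_top
  -- `T` is bounded below by 0
  have hTbdd : BddBelow T := ⟨0, fun l hl => hl.1.le⟩
  -- key membership: `l ∈ S → r * l ∈ T`
  have hkey : ∀ l ∈ S, r * l ∈ T := by
    intro l hl
    obtain ⟨hl0, hlmod⟩ := hl
    refine ⟨mul_pos hr0 hl0, ?_⟩
    have hrp : ∀ x, c ≤ r ^ p x := by
      intro x
      rw [hr, ← Real.rpow_mul hc0.le]
      calc c = c ^ (1 : ℝ) := (Real.rpow_one c).symm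
        _ ≤ c ^ (1 / pminus * p x) := Real.rpow_le_rpow_of_exponent_le hc1 (by
            rw [one_div, inv_mul_eq_div]
            exact (one_le_div hpm0).mpr (hlb x))
    have hscale := modular_scale p f l r c hr0 hc0 hrp
    have hcov := modular_cov A hdet p hp hinv f hf (r * l)
    have hcle : ENNReal.ofReal |A.det|⁻¹ ≤ ENNReal.ofReal c := by
      refine ENNReal.ofReal_le_ofReal ?_
      rw [← hAinv]
      exact le_max_right _ _
    calc modularVL p (fun x => f (A.mulVec x) / (r * l))
        = ENNReal.ofReal |A.det|⁻¹ * modularVL p (fun x => f x / (r * l)) := hcov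
      _ ≤ ENNReal.ofReal c * modularVL p (fun x => f x / (r * l)) :=
          mul_le_mul_left hcle _
      _ ≤ ENNReal.ofReal c * ((ENNReal.ofReal c)⁻¹ * modularVL p (fun x => f x / l)) :=
          mul_le_mul_right hscale _
      _ = modularVL p (fun x => f x / l) := by
          rw [← mul_assoc, ENNReal.mul_inv_cancel (by simp [hc0]) ENNReal.ofReal_ne_top,
            one_mul]
      _ ≤ 1 := hlmod
  -- conclude
  have hmain : luxNorm p (fun x => f (A.mulVec x)) ≤ r * luxNorm p f := by
    have h2 : luxNorm p (fun x => f (A.mulVec x)) / r ≤ sInf S := by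
      refine le_csInf hSne fun l hl => ?_
      rw [div_le_iff₀ hr0, mul_comm]
      rw [hTlux]
      exact csInf_le hTbdd (hkey l hl)
    rw [hSlux]
    calc luxNorm p (fun x => f (A.mulVec x))
        = luxNorm p (fun x => f (A.mulVec x)) / r * r := (div_mul_cancel₀ _ hr0.ne').symm
      _ ≤ sInf S * r := mul_le_mul_of_nonneg_right h2 hr0.le
      _ = r * sInf S := mul_comm _ _
  refine ⟨hmain, fun hdet1 => ?_⟩
  have hcr : r = 1 := by
    have : |A⁻¹.det| ≤ 1 := by
      rw [hAinv]
      exact inv_le_one_of_one_le₀ hdet1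
    rw [hr, hc, max_eq_left this, Real.one_rpow]
  rw [hcr, one_mul] at hmain
  exact hmain
end

section
/- Let A be an invertible n×n real matrix, p(·) : ℝⁿ → [1,∞) measurable with 1 ≤ p_- ≤ p_+ < ∞, p(·) ∈ N_∞(ℝⁿ), and p(Ax) ≤ p(x) a.e. Then there exists c > 0 such that ‖f ∘ A^{-1}‖_{L^{p(·)}(ℝⁿ)} ≤ c ‖f‖_{L^{p(·)}(ℝⁿ)} for all f ∈ L^{p(·)}(ℝⁿ). -/
open MeasureTheory Metric
open scoped ENNReal

/-!
Substituting `x = A y`, the modular of `f ∘ A⁻¹` is `|det A| ∫ |f y| ^ p (A y) dy`. Where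
`|f y| > 1`, the hypothesis `p (A y) ≤ p y` lets us replace the exponent by `p y`. Where
`|f y| ≤ 1`, we pass from the exponent `p (A y)` to `p_∞` and from `p_∞` to `p y`, at the cost of
the defect terms `exp (-Λ / |1/p - 1/p_∞|)`; these are integrable by the `N_∞` condition, and the
one composed with `A` only picks up the factor `|det A|⁻¹`. So the modular of `f ∘ A⁻¹` is
bounded by a constant `C` whenever that of `f` is at most `1`, and as `p ≥ 1`, dividing by `C`
turns this into `‖f ∘ A⁻¹‖ ≤ C ‖f‖`.
-/

open scoped Matrix

/-- The defect term of the `N_∞` condition. It is set to `0` when `1/s = 1/r`, where the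
formula would give `exp 0 = 1` because `0⁻¹ = 0`. -/
noncomputable def expDefect (Λ s r : ℝ) : ℝ :=
  if 1 / s = 1 / r then 0 else Real.exp (-Λ * |1 / s - 1 / r|⁻¹)

lemma expDefect_nonneg (Λ s r : ℝ) : 0 ≤ expDefect Λ s r := by
  unfold expDefect
  split_ifs <;> positivity

lemma expDefect_comm (Λ s r : ℝ) : expDefect Λ s r = expDefect Λ r s := by
  simp only [expDefect, eq_comm (a := 1 / s), abs_sub_comm]

lemma Measurable.expDefect {X : Type*} [MeasurableSpace X] {p : X → ℝ} (hp : Measurable p)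
    (Λ r : ℝ) : Measurable fun x => expDefect Λ (p x) r :=
  Measurable.ite ((measurable_const.div hp) (measurableSet_singleton _)) measurable_const
    (((measurable_const.div hp).sub measurable_const).abs.inv.const_mul _).exp

lemma lintegral_expDefect {X : Type*} [MeasurableSpace X] (μ : Measure X) {p : X → ℝ}
    (hp : Measurable p) (Λ r : ℝ) :
    ∫⁻ x, ENNReal.ofReal (expDefect Λ (p x) r) ∂μ =
      ∫⁻ x in {x | 1 / p x ≠ 1 / r}, ENNReal.ofReal (Real.exp (-Λ * |1 / p x - 1 / r|⁻¹)) ∂μ := by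
  have hS : MeasurableSet {x | 1 / p x ≠ 1 / r} :=
    ((measurable_const.div hp) (measurableSet_singleton _)).compl
  rw [← lintegral_indicator hS]
  refine lintegral_congr fun x => ?_
  by_cases h : 1 / p x = 1 / r <;>
    simp only [expDefect, Set.indicator_apply, Set.mem_ofPred_eq, h, ne_eq, not_true_eq_false,
      not_false_eq_true, if_true, if_false, ENNReal.ofReal_zero]

lemma expDefect_ge_of_nonpos {Λ s r smax : ℝ} (hΛ : 0 ≤ Λ) (hs : 0 < s) (hsmax : s ≤ smax)
    (hr : r ≤ 0) : Real.exp (-Λ * smax) ≤ expDefect Λ s r := by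
  have hgap : 1 / s ≤ 1 / s - 1 / r := by
    have : 1 / r ≤ 0 := one_div_nonpos.2 hr
    linarith
  have hs' : 0 < 1 / s := by positivity
  rw [expDefect, if_neg (by linarith), abs_of_pos (hs'.trans_le hgap), Real.exp_le_exp]
  have : (1 / s - 1 / r)⁻¹ ≤ smax := by
    calc (1 / s - 1 / r)⁻¹ ≤ (1 / s)⁻¹ := inv_anti₀ hs' hgap
      _ = s := by rw [one_div, inv_inv]
      _ ≤ smax := hsmax
  nlinarith

lemma pos_of_lintegral_expDefect_lt_top {X : Type*} [MeasurableSpace X] {μ : Measure X}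
    (hμ : μ Set.univ = ⊤) {p : X → ℝ} {pmax Λ r : ℝ} (hΛ : 0 ≤ Λ) (hp : ∀ x, 0 < p x)
    (hpmax : ∀ x, p x ≤ pmax) (hN : ∫⁻ x, ENNReal.ofReal (expDefect Λ (p x) r) ∂μ < ⊤) :
    0 < r := by
  by_contra! hr
  refine hN.ne (eq_top_iff.2 ?_)
  calc (⊤ : ℝ≥0∞) = ∫⁻ _, ENNReal.ofReal (Real.exp (-Λ * pmax)) ∂μ := by
        rw [lintegral_const, hμ, ENNReal.mul_top (ENNReal.ofReal_pos.2 (Real.exp_pos _)).ne']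
    _ ≤ ∫⁻ x, ENNReal.ofReal (expDefect Λ (p x) r) ∂μ :=
        lintegral_mono fun x =>
          ENNReal.ofReal_le_ofReal (expDefect_ge_of_nonpos hΛ (hp x) (hpmax x) hr)

/-- Either `t ^ s` is below the defect, or `t` is so close to `1` that
`t ^ (s - r) ≤ exp (Λ r)`. -/
lemma rpow_le_exp_mul_rpow_add_expDefect {t s r Λ : ℝ} (ht₀ : 0 ≤ t) (ht₁ : t ≤ 1) (hs : 0 < s)
    (hr : 0 < r) (hΛ : 0 ≤ Λ) :
    t ^ s ≤ Real.exp (Λ * r) * t ^ r + expDefect Λ s r := by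
  have hD := expDefect_nonneg Λ s r
  rcases ht₀.eq_or_lt with rfl | ht₀
  · rw [Real.zero_rpow hs.ne']
    positivity
  have hmain : (s - r) * Real.log t ≤ Λ * r →
      t ^ s ≤ Real.exp (Λ * r) * t ^ r + expDefect Λ s r := fun h => by
    calc t ^ s = t ^ (s - r) * t ^ r := by rw [← Real.rpow_add ht₀, sub_add_cancel]
      _ ≤ Real.exp (Λ * r) * t ^ r := by
          gcongr
          rw [Real.rpow_def_of_pos ht₀, Real.exp_le_exp]
          linarith
      _ ≤ _ := le_add_of_nonneg_right hD
  rcases le_or_gt r s with hrs | hsr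
  · exact hmain (by nlinarith [Real.log_nonpos ht₀.le ht₁, mul_nonneg hΛ hr.le])
  have hδ : 0 < 1 / s - 1 / r := sub_pos.2 (one_div_lt_one_div_of_lt hs hsr)
  by_cases hsmall : t ^ s ≤ expDefect Λ s r
  · exact hsmall.trans (le_add_of_nonneg_left (by positivity))
  refine hmain ?_
  rw [not_le, expDefect, if_neg (sub_pos.1 hδ).ne', abs_of_pos hδ, Real.rpow_def_of_pos ht₀,
    Real.exp_lt_exp, show (1 / s - 1 / r)⁻¹ = s * r / (r - s) by field_simp] at hsmall
  have := mul_lt_mul_of_pos_right hsmall (show 0 < (r - s) / s by bound)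
  field_simp at this
  linarith

/-- For `t > 1` this is `q ≤ p`; for `t ≤ 1` it passes through the exponent `r`. -/
lemma rpow_le_mul_rpow_add_expDefect {t q p pmax r Λ : ℝ} (ht : 0 ≤ t) (hq : 0 < q)
    (hqp : q ≤ p) (hpmax : p ≤ pmax) (hr : 0 < r) (hΛ : 0 ≤ Λ) :
    t ^ q ≤ (1 + Real.exp (Λ * r) * Real.exp (Λ * pmax)) * t ^ p +
      (Real.exp (Λ * r) * expDefect Λ p r + expDefect Λ q r) := by
  have hDp := expDefect_nonneg Λ p r
  have hDq := expDefect_nonneg Λ q r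
  have htp : 0 ≤ t ^ p := Real.rpow_nonneg ht p
  rcases le_or_gt t 1 with ht₁ | ht₁
  · have hqr := rpow_le_exp_mul_rpow_add_expDefect ht ht₁ hq hr hΛ
    have hrp := rpow_le_exp_mul_rpow_add_expDefect ht ht₁ hr (hq.trans_le hqp) hΛ
    rw [expDefect_comm] at hrp
    have hexp : Real.exp (Λ * p) ≤ Real.exp (Λ * pmax) := by gcongr
    have : t ^ r ≤ Real.exp (Λ * pmax) * t ^ p + expDefect Λ p r := by nlinarith
    nlinarith [Real.exp_pos (Λ * r), Real.exp_pos (Λ * pmax)]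
  · have : t ^ q ≤ t ^ p := Real.rpow_le_rpow_of_exponent_le ht₁.le hqp
    have : 0 ≤ Real.exp (Λ * r) * Real.exp (Λ * pmax) * t ^ p := by positivity
    have : 0 ≤ Real.exp (Λ * r) * expDefect Λ p r := mul_nonneg (Real.exp_pos _).le hDp
    linarith

lemma lintegral_comp_mulVec {ι : Type*} [Fintype ι] [DecidableEq ι] {M : Matrix ι ι ℝ}
    (hM : M.det ≠ 0) {Φ : (ι → ℝ) → ℝ≥0∞} (hΦ : Measurable Φ) :
    ∫⁻ x, Φ (M *ᵥ x) = ENNReal.ofReal |M.det|⁻¹ * ∫⁻ y, Φ y := by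
  have hM' : Measurable (Matrix.toLin' M) := (LinearMap.continuous_on_pi _).measurable
  change ∫⁻ x, Φ (Matrix.toLin' M x) = _
  rw [← lintegral_map hΦ hM', Real.map_matrix_volume_pi_eq_smul_volume_pi hM,
    lintegral_smul_measure, smul_eq_mul, abs_inv]

lemma modularVL_comp_inv_mulVec {ι : Type*} [Fintype ι] [DecidableEq ι] {A : Matrix ι ι ℝ}
    (hA : IsUnit A.det) {p g : (ι → ℝ) → ℝ} (hp : Measurable p) (hg : Measurable g) :
    modularVL p (fun x => g (A⁻¹ *ᵥ x)) =
      ENNReal.ofReal |A.det| * ∫⁻ y, ENNReal.ofReal (|g y| ^ p (A *ᵥ y)) := by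
  have hAA : ∀ x, A *ᵥ (A⁻¹ *ᵥ x) = x := fun x => by
    rw [Matrix.mulVec_mulVec, Matrix.mul_nonsing_inv A hA, Matrix.one_mulVec]
  have hdet : A⁻¹.det = A.det⁻¹ := by rw [Matrix.det_nonsing_inv, Ring.inverse_eq_inv']
  have hΦ : Measurable fun y => ENNReal.ofReal (|g y| ^ p (A *ᵥ y)) :=
    (hg.abs.pow (hp.comp (by fun_prop))).ennreal_ofReal
  calc modularVL p (fun x => g (A⁻¹ *ᵥ x))
      = ∫⁻ x, ENNReal.ofReal (|g (A⁻¹ *ᵥ x)| ^ p (A *ᵥ (A⁻¹ *ᵥ x))) := by simp only [hAA]; rfl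
    _ = ENNReal.ofReal |A.det| * ∫⁻ y, ENNReal.ofReal (|g y| ^ p (A *ᵥ y)) := by
      rw [lintegral_comp_mulVec (by rw [hdet]; exact inv_ne_zero hA.ne_zero) hΦ, hdet, abs_inv,
        inv_inv]

lemma modularVL_comp_inv_mulVec_le {ι : Type*} [Fintype ι] [DecidableEq ι] {A : Matrix ι ι ℝ}
    (hA : IsUnit A.det) {p g : (ι → ℝ) → ℝ} (hp : Measurable p) (hg : Measurable g)
    {pmax r Λ : ℝ} (hp0 : ∀ x, 0 < p x) (hpmax : ∀ x, p x ≤ pmax) (hr : 0 < r) (hΛ : 0 ≤ Λ)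
    (hle : ∀ᵐ x, p (A *ᵥ x) ≤ p x) :
    modularVL p (fun x => g (A⁻¹ *ᵥ x)) ≤ ENNReal.ofReal |A.det| *
      (ENNReal.ofReal (1 + Real.exp (Λ * r) * Real.exp (Λ * pmax)) * modularVL p g +
        (ENNReal.ofReal (Real.exp (Λ * r)) + ENNReal.ofReal |A.det|⁻¹) *
          ∫⁻ x, ENNReal.ofReal (expDefect Λ (p x) r)) := by
  set a := 1 + Real.exp (Λ * r) * Real.exp (Λ * pmax)
  set b := Real.exp (Λ * r)
  set D : (ι → ℝ) → ℝ≥0∞ := fun x => ENNReal.ofReal (expDefect Λ (p x) r)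
  have hD : Measurable D := (hp.expDefect Λ r).ennreal_ofReal
  have hgp : Measurable fun y => ENNReal.ofReal (|g y| ^ p y) := (hg.abs.pow hp).ennreal_ofReal
  have hDA : ∫⁻ y, D (A *ᵥ y) = ENNReal.ofReal |A.det|⁻¹ * ∫⁻ x, D x :=
    lintegral_comp_mulVec hA.ne_zero hD
  rw [modularVL_comp_inv_mulVec hA hp hg]
  gcongr
  calc ∫⁻ y, ENNReal.ofReal (|g y| ^ p (A *ᵥ y))
      ≤ ∫⁻ y, (ENNReal.ofReal a * ENNReal.ofReal (|g y| ^ p y) +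
          (ENNReal.ofReal b * D y + D (A *ᵥ y))) := by
        refine lintegral_mono_ae (hle.mono fun y hy => ?_)
        have := expDefect_nonneg Λ (p y) r
        have := expDefect_nonneg Λ (p (A *ᵥ y)) r
        rw [← ENNReal.ofReal_mul (by positivity), ← ENNReal.ofReal_mul (by positivity),
          ← ENNReal.ofReal_add (by positivity) (by positivity),
          ← ENNReal.ofReal_add (by positivity) (by positivity)]
        exact ENNReal.ofReal_le_ofReal
          (rpow_le_mul_rpow_add_expDefect (abs_nonneg _) (hp0 _) hy (hpmax y) hr hΛ)
    _ = ENNReal.ofReal a * modularVL p g +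
          (ENNReal.ofReal b + ENNReal.ofReal |A.det|⁻¹) * ∫⁻ x, D x := by
        rw [lintegral_add_left (hgp.const_mul _), lintegral_const_mul _ hgp,
          lintegral_add_left (hD.const_mul _), lintegral_const_mul _ hD, hDA, add_mul]
        rfl

lemma modularVL_div_le_one_of_le {X : Type*} [MeasureSpace X] {p g : X → ℝ}
    (hp : ∀ x, 1 ≤ p x) {c : ℝ} (hc : 1 ≤ c) (hg : modularVL p g ≤ ENNReal.ofReal c) :
    modularVL p (fun x => g x / c) ≤ 1 := by
  have hc₀ : 0 < c := one_pos.trans_le hc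
  calc modularVL p (fun x => g x / c) ≤ ENNReal.ofReal c⁻¹ * modularVL p g := by
        unfold modularVL
        rw [← lintegral_const_mul' _ _ ENNReal.ofReal_ne_top]
        refine lintegral_mono fun x => ?_
        rw [← ENNReal.ofReal_mul (by positivity), abs_div, abs_of_pos hc₀,
          Real.div_rpow (abs_nonneg _) hc₀.le, inv_mul_eq_div]
        gcongr
        exact Real.self_le_rpow_of_one_le hc (hp x)
    _ ≤ ENNReal.ofReal c⁻¹ * ENNReal.ofReal c := by gcongr
    _ = 1 := by
        rw [← ENNReal.ofReal_mul (by positivity), inv_mul_cancel₀ hc₀.ne', ENNReal.ofReal_one]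

lemma MemVLp.exists_modularVL_le_one {X : Type*} [MeasureSpace X] {p f : X → ℝ}
    (hp : ∀ x, 1 ≤ p x) (hf : MemVLp p f) :
    ∃ l, 0 < l ∧ modularVL p (fun x => f x / l) ≤ 1 := by
  obtain ⟨l, hl, hfl⟩ := hf
  set m := (modularVL p (fun x => f x / l)).toReal
  refine ⟨(1 + m) * l, by positivity, ?_⟩
  simp_rw [mul_comm (1 + m), ← div_div]
  refine modularVL_div_le_one_of_le hp (by simp [m]) ?_
  rw [← ENNReal.ofReal_toReal hfl.ne]
  exact ENNReal.ofReal_le_ofReal (by linarith)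

lemma luxNorm_le_mul_of_modularVL_le {X : Type*} [MeasureSpace X] {p f g : X → ℝ}
    (hp : ∀ x, 1 ≤ p x) {C : ℝ} (hC : 1 ≤ C) (hf : MemVLp p f)
    (h : ∀ l, 0 < l → modularVL p (fun x => f x / l) ≤ 1 →
      modularVL p (fun x => g x / l) ≤ ENNReal.ofReal C) :
    luxNorm p g ≤ C * luxNorm p f := by
  have hC₀ : 0 < C := one_pos.trans_le hC
  have hg : ∀ l ∈ {l | 0 < l ∧ modularVL p (fun x => f x / l) ≤ 1}, luxNorm p g ≤ C * l := by
    rintro l ⟨hl, hfl⟩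
    refine csInf_le ⟨0, fun _ h => h.1.le⟩ ⟨by positivity, ?_⟩
    simp_rw [mul_comm C, ← div_div]
    exact modularVL_div_le_one_of_le hp hC (h l hl hfl)
  rw [← div_le_iff₀' hC₀]
  exact le_csInf (hf.exists_modularVL_le_one hp) fun l hl => (div_le_iff₀' hC₀).2 (hg l hl)

/-- if `A` is invertible, `1 ≤ p_- ≤ p(x) ≤ p_+ < ∞`, `p(·) ∈ N_∞(ℝⁿ)` and
`p(Ax) ≤ p(x)` a.e., then there is `c > 0` with
`‖f ∘ A⁻¹‖_{p(·)} ≤ c ‖f‖_{p(·)}` for all `f ∈ L^{p(·)}(ℝⁿ)`. -/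
theorem stmt7 {n : ℕ} (A : Matrix (Fin n) (Fin n) ℝ) (hA : IsUnit A.det)
    (p : (Fin n → ℝ) → ℝ) (hp : Measurable p)
    (pminus pplus : ℝ) (h1 : 1 ≤ pminus)
    (hlb : ∀ x, pminus ≤ p x) (hub : ∀ x, p x ≤ pplus)
    (Λ pinf : ℝ) (hΛ : 0 < Λ)
    (hN : (∫⁻ x in {x | 1 / p x ≠ 1 / pinf},
      ENNReal.ofReal (Real.exp (-Λ * |1 / p x - 1 / pinf|⁻¹))) < ⊤)
    (hle : ∀ᵐ x, p (A.mulVec x) ≤ p x) :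
    ∃ c : ℝ, 0 < c ∧ ∀ f : (Fin n → ℝ) → ℝ, Measurable f → MemVLp p f →
      luxNorm p (fun x => f (A⁻¹.mulVec x)) ≤ c * luxNorm p f := by
  have hp1 : ∀ x, 1 ≤ p x := fun x => h1.trans (hlb x)
  have hp0 : ∀ x, 0 < p x := fun x => one_pos.trans_le (hp1 x)
  cases n with
  | zero =>
    refine ⟨1, one_pos, fun f _ _ => ?_⟩
    rw [one_mul]
    exact (congrArg (luxNorm p) (funext fun x => congrArg f (Subsingleton.elim _ x))).le
  | succ n =>
    rw [← lintegral_expDefect volume hp] at hN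
    have hpinf : 0 < pinf := pos_of_lintegral_expDefect_lt_top
      (measure_univ_of_isAddLeftInvariant volume) hΛ.le hp0 hub hN
    obtain ⟨c, hc, hC⟩ : ∃ c : ℝ, 1 ≤ c ∧ ENNReal.ofReal |A.det| *
        (ENNReal.ofReal (1 + Real.exp (Λ * pinf) * Real.exp (Λ * pplus)) +
          (ENNReal.ofReal (Real.exp (Λ * pinf)) + ENNReal.ofReal |A.det|⁻¹) *
            ∫⁻ x, ENNReal.ofReal (expDefect Λ (p x) pinf)) ≤ ENNReal.ofReal c :=
      ⟨_, le_max_right _ 1,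
        (ENNReal.le_ofReal_iff_toReal_le (by finiteness) (by positivity)).2 (le_max_left _ _)⟩
    refine ⟨c, by positivity, fun f hf hfp =>
      luxNorm_le_mul_of_modularVL_le hp1 hc hfp fun l _ hfl => ?_⟩
    refine (modularVL_comp_inv_mulVec_le hA hp (hf.div_const l) hp0 hub hpinf hΛ.le hle).trans
      (le_trans ?_ hC)
    gcongr
    exact mul_le_of_le_one_right' hfl
end
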